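/- arXiv:0712.4071 — 7 statements merged into one kernel-verified Lean document; each statement's English description precedes it below -/
import Mathlib

section
/- The set D = {E_{-i} + E_i : i ∈ ℤ, i ≥ 0} ∪ {E_{-i} + E_{1+i} : i ∈ ℤ, i ≥ 0} is a basis of E; that is, D is a linearly independent subset of E and D spans E. -/
/-!
Enumerate ℤ along the zigzag `0, 1, -1, 2, -2, …`. Then `D` consists of the vectors
`Evec (zigzag k) + Evec (zigzag (k - 1))`, `k : ℕ`: the first is `2 • Evec 0` (truncated
subtraction gives `0 - 1 = 0`), the others are sums of consecutive basis vectors along the zigzag.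
Passing from a basis `(v k)` to `(v k + v (k - 1))` is a triangular change of basis with diagonal
`2, 1, 1, …`, so when `2 ≠ 0` the spans of the first `n` vectors of both families agree for every
`n`; this gives both spanning and linear independence.
-/

/-- The basis vector `E_i` of the ℚ-vector space `E = ℤ →₀ ℚ`. -/
noncomputable def Evec (i : ℤ) : ℤ →₀ ℚ := Finsupp.single i 1

/-- The set `D = {E_{-i} + E_i : i ≥ 0} ∪ {E_{-i} + E_{1+i} : i ≥ 0}`. -/
def Dset : Set (ℤ →₀ ℚ) :=
  {x | ∃ i : ℤ, 0 ≤ i ∧ x = Evec (-i) + Evec i} ∪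
  {x | ∃ i : ℤ, 0 ≤ i ∧ x = Evec (-i) + Evec (1 + i)}

open Set Submodule

theorem Submodule.span_insert_add_of_mem {R M : Type*} [Ring R] [AddCommGroup M] [Module R M]
    {s : Set M} {x y : M} (hy : y ∈ span R s) :
    span R (insert (x + y) s) = span R (insert x s) := by
  apply le_antisymm <;> rw [span_le, insert_subset_iff]
  · have hy' := span_mono (subset_insert x s) hy
    exact ⟨add_mem (subset_span (mem_insert x s)) hy', (subset_insert x s).trans subset_span⟩
  · have hy' := span_mono (subset_insert (x + y) s) hy
    refine ⟨?_, (subset_insert _ s).trans subset_span⟩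
    simpa using sub_mem (subset_span (mem_insert (x + y) s)) hy'

theorem Nat.Iio_add_one_eq_insert (n : ℕ) : Iio (n + 1) = insert n (Iio n) :=
  Order.succ_eq_add_one n ▸ Order.Iio_succ_eq_insert n

section AddPred

variable {K V : Type*} [Field K] [AddCommGroup V] [Module K V] [NeZero (2 : K)]

theorem span_image_Iio_add_pred (v : ℕ → V) (n : ℕ) :
    span K ((fun k ↦ v k + v (k - 1)) '' Iio n) = span K (v '' Iio n) := by
  induction n with
  | zero => simp
  | succ n ih =>
    rw [Nat.Iio_add_one_eq_insert, image_insert_eq, image_insert_eq, span_insert, span_insert, ih]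
    rcases n with _ | m
    · have h2 : IsUnit (2 : K) := (NeZero.ne 2).isUnit
      simp [← two_smul K (v 0), span_singleton_smul_eq h2]
    · have hm : v m ∈ span K (v '' Iio (m + 1)) := subset_span ⟨m, by simp, rfl⟩
      rw [← span_insert, ← span_insert, Nat.add_sub_cancel, span_insert_add_of_mem hm]

theorem span_range_add_pred (v : ℕ → V) :
    span K (range fun k ↦ v k + v (k - 1)) = span K (range v) := by
  simp_rw [← image_univ, ← iUnion_Iio, image_iUnion, span_iUnion, span_image_Iio_add_pred]

theorem LinearIndependent.add_pred {v : ℕ → V} (hv : LinearIndependent K v) :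
    LinearIndependent K fun k ↦ v k + v (k - 1) := by
  set g : ℕ → V := fun k ↦ v k + v (k - 1)
  have hg : ∀ n, g n ∉ span K (g '' Iio n) := by
    rintro (_ | m) hm
    · have h2v : (2 : K) • v 0 = 0 := by simpa [g, two_smul] using hm
      exact smul_ne_zero (NeZero.ne 2) (hv.ne_zero 0) h2v
    · rw [span_image_Iio_add_pred] at hm
      have hvm : v m ∈ span K (v '' Iio (m + 1)) := subset_span ⟨m, by simp, rfl⟩
      exact hv.notMem_span_image self_notMem_Iio (by simpa [g] using sub_mem hm hvm)
  have hIio : ∀ n, LinearIndepOn K g (Iio n) := by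
    intro n
    induction n with
    | zero => simp
    | succ n ih => rw [Nat.Iio_add_one_eq_insert]; exact ih.insert (hg n)
  rw [← linearIndepOn_univ_iff, ← iUnion_Iio]
  exact linearIndepOn_iUnion_of_directed monotone_Iio.directed_le hIio

end AddPred

def zigzag (k : ℕ) : ℤ := if k % 2 = 0 then -(k / 2 : ℕ) else (k / 2 : ℕ) + 1

theorem zigzag_two_mul (m : ℕ) : zigzag (2 * m) = -m := by
  unfold zigzag; split_ifs <;> omega

theorem zigzag_two_mul_add_one (m : ℕ) : zigzag (2 * m + 1) = m + 1 := by
  unfold zigzag; split_ifs <;> omega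

theorem zigzag_two_mul_sub_one (m : ℕ) : zigzag (2 * m - 1) = m := by
  unfold zigzag; split_ifs <;> omega

theorem zigzag_bijective : Function.Bijective zigzag := by
  refine ⟨fun k l h ↦ ?_, fun z ↦ ?_⟩
  · unfold zigzag at h; split_ifs at h <;> omega
  · rcases le_or_gt z 0 with hz | hz
    · lift -z to ℕ using neg_nonneg.mpr hz with m hm
      exact ⟨2 * m, by rw [zigzag_two_mul]; omega⟩
    · lift z - 1 to ℕ using by omega with m hm
      exact ⟨2 * m + 1, by rw [zigzag_two_mul_add_one]; omega⟩

noncomputable def zigzagBasis : Module.Basis ℕ ℚ (ℤ →₀ ℚ) :=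
  Finsupp.basisSingleOne.reindex (Equiv.ofBijective zigzag zigzag_bijective).symm

theorem zigzagBasis_apply (k : ℕ) : zigzagBasis k = Evec (zigzag k) := by
  simp [zigzagBasis, Evec]

theorem evec_zigzag_add_pred_two_mul (m : ℕ) :
    Evec (zigzag (2 * m)) + Evec (zigzag (2 * m - 1)) = Evec (-m) + Evec m := by
  rw [zigzag_two_mul, zigzag_two_mul_sub_one]

theorem evec_zigzag_add_pred_two_mul_add_one (m : ℕ) :
    Evec (zigzag (2 * m + 1)) + Evec (zigzag (2 * m + 1 - 1)) = Evec (-m) + Evec (1 + m) := by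
  rw [zigzag_two_mul_add_one, Nat.add_sub_cancel, zigzag_two_mul, add_comm, add_comm (m : ℤ)]

theorem range_zigzagBasis_add_pred :
    range (fun k ↦ zigzagBasis k + zigzagBasis (k - 1)) = Dset := by
  simp_rw [zigzagBasis_apply]
  ext x
  constructor
  · rintro ⟨k, rfl⟩
    obtain ⟨m, rfl | rfl⟩ := Nat.even_or_odd' k
    · exact Or.inl ⟨m, m.cast_nonneg, evec_zigzag_add_pred_two_mul m⟩
    · exact Or.inr ⟨m, m.cast_nonneg, evec_zigzag_add_pred_two_mul_add_one m⟩
  · rintro (⟨i, hi, rfl⟩ | ⟨i, hi, rfl⟩) <;> lift i to ℕ using hi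
    · exact ⟨2 * i, evec_zigzag_add_pred_two_mul i⟩
    · exact ⟨2 * i + 1, evec_zigzag_add_pred_two_mul_add_one i⟩

/-- The set `D` is a basis of `E`: it is linearly independent and spans `E`. -/
theorem stmt_0 :
    LinearIndependent ℚ (fun v : Dset => (v : ℤ →₀ ℚ)) ∧
    Submodule.span ℚ Dset = ⊤ := by
  have hD := range_zigzagBasis_add_pred
  exact ⟨zigzagBasis.linearIndependent.add_pred.linearIndepOn_id' hD,
    by rw [← hD, span_range_add_pred, zigzagBasis.span_eq]⟩
end

section
/- For every n ∈ ℤ and every k ∈ O, the set B^n_{k,k} is linearly independent and spans X^n_{k,k}; that is, B^n_{k,k} is a basis of X^n_{k,k}. -/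
/-- The type of odd integers. -/
abbrev OddZ : Type := {k : ℤ // Odd k}

/-- The ℚ-vector space `X` with basis indexed by `(a, b, k, l)`, `a, b ∈ ℤ`, `k, l` odd. -/
abbrev XSp : Type := (ℤ × ℤ × OddZ × OddZ) →₀ ℚ

/-- The basis vector `X^{a,b}_{k,l}`. -/
noncomputable def Xb (a b : ℤ) (k l : OddZ) : XSp := Finsupp.single (a, b, k, l) 1

/-- The subspace `X^n_{k,l}` spanned by all `X^{a,b}_{k,l}` and `X^{a,b}_{l,k}` with `a + b = n`. -/
noncomputable def Xsub (n : ℤ) (k l : OddZ) : Submodule ℚ XSp :=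
  Submodule.span ℚ {x | ∃ a b : ℤ, a + b = n ∧ (x = Xb a b k l ∨ x = Xb a b l k)}

/-- The set `B^n_{k,l} = {X^{a,b}_{k,l} + X^{b,a}_{l,k} : a + b = n} ∪
{X^{a,b+1}_{k,l} + X^{b,a+1}_{l,k} : a + b = n - 1}`. -/
def Bset (n : ℤ) (k l : OddZ) : Set XSp :=
  {x | ∃ a b : ℤ, a + b = n ∧ x = Xb a b k l + Xb b a l k} ∪
  {x | ∃ a b : ℤ, a + b = n - 1 ∧ x = Xb a (b + 1) k l + Xb b (a + 1) l k}

/-! For `k = l` the vectors `X^{p,n-p}_{k,k}` (`p ∈ ℤ`) form a basis of `X^n_{k,k}`, and `B^n_{k,k}`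
consists of the sums of two of them whose indices satisfy `p + q ∈ {n - 1, n}`. As a graph on `ℤ`
this relation is a ray `p₀ — p₁ — p₂ — ⋯` with a loop at `p₀ = ⌊n/2⌋`, so `B^n_{k,k}` is the family
`w = (v₀ + v₀, v₀ + v₁, v₁ + v₂, …)` of an enumerated basis `v`. As `2` is invertible in `ℚ`, this
triangular system can be solved for `v` (`v₀ = w₀ / 2`, `vⱼ₊₁ = wⱼ₊₁ - vⱼ`), so `w` is again a basis
of the span of `v`. -/

open Submodule Set

section RayIncidence

def rayIncidence {V : Type*} [Add V] (v : ℕ → V) : ℕ → V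
  | 0 => v 0 + v 0
  | j + 1 => v j + v (j + 1)

theorem rayIncidence_comp {V W F : Type*} [Add V] [Add W] [FunLike F V W]
    [AddHomClass F V W] (f : F) (v : ℕ → V) :
    rayIncidence (f ∘ v) = f ∘ rayIncidence v := by
  funext j
  cases j <;> simp [rayIncidence]

variable (K : Type*) {V : Type*} [DivisionRing K] [NeZero (2 : K)] [AddCommGroup V] [Module K V]

noncomputable def rayIncidenceInv : ℕ → ℕ →₀ K
  | 0 => (2⁻¹ : K) • Finsupp.single 0 1
  | j + 1 => Finsupp.single (j + 1) 1 - rayIncidenceInv j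

theorem rayIncidence_rayIncidenceInv :
    rayIncidence (rayIncidenceInv K) = fun j => Finsupp.single j 1 := by
  funext j
  cases j with
  | zero =>
    rw [rayIncidence, rayIncidenceInv, ← add_smul, ← two_mul, mul_inv_cancel₀ two_ne_zero,
      one_smul]
  | succ j => simp [rayIncidence, rayIncidenceInv]

theorem linearIndependent_rayIncidence_single :
    LinearIndependent K (rayIncidence (Finsupp.single · (1 : K))) := by
  have hinv : Finsupp.linearCombination K (rayIncidenceInv K) ∘ (Finsupp.single · (1 : K)) =
      rayIncidenceInv K := by
    funext j
    simp
  refine .of_comp (Finsupp.linearCombination K (rayIncidenceInv K)) ?_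
  rw [← rayIncidence_comp, hinv, rayIncidence_rayIncidenceInv]
  exact Finsupp.linearIndependent_single_one K ℕ

variable {K}

theorem linearIndependent_rayIncidence {v : ℕ → V} (hv : LinearIndependent K v) :
    LinearIndependent K (rayIncidence v) := by
  have hv_eq : rayIncidence v =
      Finsupp.linearCombination K v ∘ rayIncidence (Finsupp.single · (1 : K)) := by
    rw [← rayIncidence_comp]
    congr 1
    funext j
    simp
  rw [hv_eq]
  exact (linearIndependent_rayIncidence_single K).map' _ (LinearMap.ker_eq_bot.mpr hv)

theorem span_range_rayIncidence (v : ℕ → V) :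
    span K (range (rayIncidence v)) = span K (range v) := by
  apply le_antisymm
  · rw [span_le]
    rintro _ ⟨_ | j, rfl⟩ <;>
      exact add_mem (subset_span ⟨_, rfl⟩) (subset_span ⟨_, rfl⟩)
  · rw [span_le]
    rintro _ ⟨j, rfl⟩
    induction j with
    | zero =>
      have hv0 : v 0 = (2⁻¹ : K) • rayIncidence v 0 := by
        rw [rayIncidence, ← two_smul K, smul_smul, inv_mul_cancel₀ two_ne_zero, one_smul]
      rw [hv0]
      exact smul_mem _ _ (subset_span ⟨0, rfl⟩)
    | succ j ih =>
      have hv_succ : v (j + 1) = rayIncidence v (j + 1) - v j := by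
        simp [rayIncidence]
      rw [hv_succ]
      exact sub_mem (subset_span ⟨_, rfl⟩) ih

end RayIncidence

/-- The enumeration `⌊n/2⌋, ⌊n/2⌋ ∓ 1, ⌊n/2⌋ ± 1, ⌊n/2⌋ ∓ 2, …` of `ℤ`, with signs chosen so that
consecutive terms sum alternately to `n - 1` and `n`. -/
def ray (n : ℤ) (j : ℕ) : ℤ :=
  if (n + j) % 2 = 0 then n / 2 + (j + 1) / 2 else n / 2 - (j + 1) / 2

theorem ray_add_ray_eq_iff (n : ℤ) (i j : ℕ) :
    (ray n i + ray n j = n ∨ ray n i + ray n j = n - 1) ↔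
      (i = 0 ∧ j = 0) ∨ j = i + 1 ∨ i = j + 1 := by
  unfold ray
  split_ifs <;> omega

theorem ray_injective (n : ℤ) : Function.Injective (ray n) := by
  intro i j h
  unfold ray at h
  split_ifs at h <;> omega

theorem ray_surjective (n : ℤ) : Function.Surjective (ray n) := by
  intro p
  -- `4 * ray n j - 2 * n + 1 = ± (2 * j + 1)`
  refine ⟨((4 * p - 2 * n + 1).natAbs - 1) / 2, ?_⟩
  unfold ray
  split_ifs <;> omega

section Diagonal

variable (n : ℤ) (k : OddZ)

noncomputable def Xdiag (p : ℤ) : XSp := Xb p (n - p) k k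

theorem Xb_eq_Xdiag {a b : ℤ} (hab : a + b = n) : Xb a b k k = Xdiag n k a := by
  rw [Xdiag, ← hab, add_sub_cancel_left]

theorem linearIndependent_Xdiag : LinearIndependent ℚ (Xdiag n k) :=
  (Finsupp.linearIndependent_single_one ℚ _).comp (fun p => (p, n - p, k, k))
    fun _ _ h => (Prod.ext_iff.mp h).1

theorem Xsub_self_eq : Xsub n k k = span ℚ (range (Xdiag n k)) := by
  rw [Xsub]
  congr 1
  ext x
  constructor
  · rintro ⟨a, b, hab, rfl | rfl⟩ <;> exact ⟨a, (Xb_eq_Xdiag n k hab).symm⟩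
  · rintro ⟨p, rfl⟩
    exact ⟨p, n - p, add_sub_cancel p n, Or.inl rfl⟩

theorem Bset_self_eq :
    Bset n k k =
      {x | ∃ p q : ℤ, (p + q = n ∨ p + q = n - 1) ∧ x = Xdiag n k p + Xdiag n k q} := by
  ext x
  constructor
  · rintro (⟨a, b, hab, rfl⟩ | ⟨a, b, hab, rfl⟩)
    · exact ⟨a, b, .inl hab, by rw [Xb_eq_Xdiag n k hab, Xb_eq_Xdiag n k (by omega)]⟩
    · exact ⟨a, b, .inr hab, by rw [Xb_eq_Xdiag n k (by omega), Xb_eq_Xdiag n k (by omega)]⟩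
  · rintro ⟨p, q, hpq | hpq, rfl⟩
    · exact .inl ⟨p, q, hpq, by rw [Xb_eq_Xdiag n k hpq, Xb_eq_Xdiag n k (by omega)]⟩
    · exact .inr ⟨p, q, hpq, by rw [Xb_eq_Xdiag n k (by omega), Xb_eq_Xdiag n k (by omega)]⟩

theorem Bset_self_eq_range : Bset n k k = range (rayIncidence (Xdiag n k ∘ ray n)) := by
  rw [Bset_self_eq]
  ext x
  constructor
  · rintro ⟨p, q, hpq, rfl⟩
    obtain ⟨i, rfl⟩ := ray_surjective n p
    obtain ⟨j, rfl⟩ := ray_surjective n q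
    rcases (ray_add_ray_eq_iff n i j).mp hpq with ⟨rfl, rfl⟩ | rfl | rfl
    · exact ⟨0, rfl⟩
    · exact ⟨i + 1, rfl⟩
    · exact ⟨j + 1, add_comm _ _⟩
  · rintro ⟨_ | j, rfl⟩
    · exact ⟨ray n 0, ray n 0, (ray_add_ray_eq_iff n 0 0).mpr (.inl ⟨rfl, rfl⟩), rfl⟩
    · exact ⟨ray n j, ray n (j + 1), (ray_add_ray_eq_iff n _ _).mpr (.inr (.inl rfl)), rfl⟩

end Diagonal

/-- For every `n ∈ ℤ` and odd `k`, the set `B^n_{k,k}` is a basis of `X^n_{k,k}`: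
it is linearly independent and spans `X^n_{k,k}`. -/
theorem stmt_2 (n : ℤ) (k : OddZ) :
    LinearIndependent ℚ (fun v : Bset n k k => (v : XSp)) ∧
    Submodule.span ℚ (Bset n k k) = Xsub n k k := by
  rw [Bset_self_eq_range]
  constructor
  · have hv := (linearIndependent_Xdiag n k).comp _ (ray_injective n)
    exact (linearIndependent_rayIncidence hv).linearIndepOn_id
  · rw [span_range_rayIncidence, range_comp, (ray_surjective n).range_eq, image_univ,
      Xsub_self_eq]
end

section
/- For every n ∈ ℤ and all k, l ∈ O with k < l, the set B^n_{k,l} is linearly independent, its span is contained in X^n_{k,l}, and the span of B^n_{k,l} has codimension 1 in X^n_{k,l}; that is, the quotient space X^n_{k,l} / span(B^n_{k,l}) is one-dimensional over ℚ. -/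
/-! With `e a = X^{a,n-a}_{k,l}` and `f a = X^{n-a,a}_{l,k}`, the generators of `X^n_{k,l}` form a
single ℤ-indexed chain `…, f a, e a, f (a+1), e (a+1), …` of distinct basis vectors (as `k ≠ l`),
and `B^n_{k,l}` is exactly the set of sums of two consecutive terms of the chain.

For a family `w : ℤ → V`, `∑ g i • (w i + w (i+1)) = ∑ h i • w i` with `h = (1 + T) g`, viewing
`ℤ →₀ R` as Laurent polynomials in `T`. Multiplication by `1 + T` is injective (compare top
coefficients), so the sums are independent when `w` is; evaluation at `T = -1` kills its image but
not `1`, so `w 0` is not in the span of the sums; conversely `w 0` and the sums span every `w i`.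
Hence `span B` is a hyperplane of `X^n_{k,l}` with complement spanned by `e 0`. -/

open Submodule Finsupp

section Quotient
variable {K V : Type*} [DivisionRing K] [AddCommGroup V] [Module K V]

theorem rank_quotient_span_singleton_sup {p : Submodule K V} {x : V} (hx : x ∉ p) :
    Module.rank K (↥((K ∙ x) ⊔ p) ⧸ p.comap ((K ∙ x) ⊔ p).subtype) = 1 := by
  have hx0 : x ≠ 0 := fun h => hx (h ▸ p.zero_mem)
  have hbot : comap (K ∙ x).subtype (K ∙ x) ⊓ comap (K ∙ x).subtype p = ⊥ := by
    rw [← comap_inf, inf_comm, disjoint_iff.mp ((disjoint_span_singleton' hx0).mpr hx),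
      comap_bot, ker_subtype]
  rw [← (LinearMap.quotientInfEquivSupQuotient _ p).rank_eq, (quotEquivOfEqBot _ hbot).rank_eq,
    ← Module.finrank_eq_rank, finrank_span_singleton hx0, Nat.cast_one]

end Quotient

section Shift
variable {R V : Type*} [Ring R] [AddCommGroup V] [Module R V]

variable (R) in
noncomputable def idAddShift : (ℤ →₀ R) →ₗ[R] ℤ →₀ R :=
  LinearMap.id + lmapDomain R R (· + 1)

variable (R) in
noncomputable def altSum : (ℤ →₀ R) →ₗ[R] R :=
  linearCombination R fun i : ℤ => ((i.negOnePow : ℤ) : R)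

theorem idAddShift_single (i : ℤ) (c : R) :
    idAddShift R (single i c) = single i c + single (i + 1) c := by
  simp [idAddShift]

theorem linearCombination_comp_idAddShift (w : ℤ → V) :
    linearCombination R w ∘ₗ idAddShift R = linearCombination R fun i => w i + w (i + 1) := by
  ext i
  simp [idAddShift_single]

theorem altSum_comp_idAddShift : altSum R ∘ₗ idAddShift R = 0 := by
  refine lhom_ext fun i c => ?_
  simp only [LinearMap.comp_apply, idAddShift_single, map_add, altSum, linearCombination_single,
    Int.negOnePow_succ, Units.val_neg, Int.cast_neg, smul_neg, add_neg_cancel, LinearMap.zero_apply]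

theorem idAddShift_injective : Function.Injective (idAddShift R) := by
  rw [← LinearMap.ker_eq_bot, LinearMap.ker_eq_bot']
  intro g hg
  by_contra hne
  have hsupp : g.support.Nonempty := support_nonempty_iff.mpr hne
  set m := g.support.max' hsupp
  have hm : g m ≠ 0 := mem_support_iff.mp (g.support.max'_mem hsupp)
  have hm1 : g (m + 1) = 0 := notMem_support_iff.mp fun h =>
    (lt_add_one m).not_ge (g.support.le_max' _ h)
  have := congrArg (· (m + 1)) hg
  rw [idAddShift, LinearMap.add_apply, Finsupp.add_apply, LinearMap.id_apply, hm1, zero_add,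
    lmapDomain_apply, mapDomain_apply (add_left_injective 1)] at this
  exact hm this

end Shift

section Chain
variable {R V : Type*} [Ring R] [AddCommGroup V] [Module R V] {w : ℤ → V}

theorem LinearIndependent.add_succ (hw : LinearIndependent R w) :
    LinearIndependent R fun i => w i + w (i + 1) := by
  rw [LinearIndependent, ← linearCombination_comp_idAddShift, LinearMap.coe_comp]
  exact Function.Injective.comp hw idAddShift_injective

theorem LinearIndependent.notMem_span_add_succ [Nontrivial R] (hw : LinearIndependent R w) :
    w 0 ∉ span R (Set.range fun i => w i + w (i + 1)) := by
  rw [← range_linearCombination, ← linearCombination_comp_idAddShift]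
  rintro ⟨g, hg⟩
  have hshift : idAddShift R g = single 0 1 := hw (by simpa using hg)
  have := congrArg (altSum R) hshift
  rw [← LinearMap.comp_apply, altSum_comp_idAddShift] at this
  simp [altSum] at this

theorem span_singleton_sup_span_add_succ (w : ℤ → V) :
    (R ∙ w 0) ⊔ span R (Set.range fun i => w i + w (i + 1)) = span R (Set.range w) := by
  set S := (R ∙ w 0) ⊔ span R (Set.range fun i => w i + w (i + 1))
  have hsum (i : ℤ) : w i + w (i + 1) ∈ S := mem_sup_right (subset_span ⟨i, rfl⟩)
  refine le_antisymm (sup_le ?_ ?_) (span_le.2 (Set.range_subset_iff.2 fun i => ?_))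
  · exact (span_singleton_le_iff_mem _ _).2 (subset_span ⟨0, rfl⟩)
  · exact span_le.2 (Set.range_subset_iff.2 fun i =>
      add_mem (subset_span ⟨i, rfl⟩) (subset_span ⟨i + 1, rfl⟩))
  induction i using Int.induction_on with
  | zero => exact mem_sup_left (mem_span_singleton_self _)
  | succ i ih => exact (add_mem_cancel_left ih).1 (hsum i)
  | pred i ih => exact (add_mem_cancel_right ih).1 (by simpa using hsum (-i - 1))

end Chain

def chainIdx (n : ℤ) (k l : OddZ) (i : ℤ) : ℤ × ℤ × OddZ × OddZ :=
  if i % 2 = 0 then (i / 2, n - i / 2, k, l) else (n - i / 2 - 1, i / 2 + 1, l, k)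

noncomputable def chain (n : ℤ) (k l : OddZ) (i : ℤ) : XSp :=
  single (chainIdx n k l i) 1

theorem chainIdx_injective {k l : OddZ} (hkl : k ≠ l) (n : ℤ) :
    Function.Injective (chainIdx n k l) := by
  intro i j h
  unfold chainIdx at h
  split_ifs at h <;> simp only [Prod.mk.injEq] at h
  · omega
  · exact absurd h.2.2.1 hkl
  · exact absurd h.2.2.1 hkl.symm
  · omega

theorem chain_of_even {n i a b : ℤ} {k l : OddZ} (hi : i = 2 * a) (hab : a + b = n) :
    chain n k l i = Xb a b k l := by
  rw [chain, Xb, chainIdx, if_pos (by omega)]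
  congr 1
  simp only [Prod.mk.injEq, and_true]
  omega

theorem chain_of_odd {n i a b : ℤ} {k l : OddZ} (hi : i = 2 * b - 1) (hab : a + b = n) :
    chain n k l i = Xb a b l k := by
  rw [chain, Xb, chainIdx, if_neg (by omega)]
  congr 1
  simp only [Prod.mk.injEq, and_true]
  omega

theorem Xsub_eq_span_range_chain (n : ℤ) (k l : OddZ) :
    Xsub n k l = span ℚ (Set.range (chain n k l)) := by
  rw [Xsub]
  congr 1
  ext x
  constructor
  · rintro ⟨a, b, hab, rfl | rfl⟩
    · exact ⟨2 * a, chain_of_even rfl hab⟩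
    · exact ⟨2 * b - 1, chain_of_odd rfl hab⟩
  · rintro ⟨i, rfl⟩
    obtain ⟨a, rfl | rfl⟩ := Int.even_or_odd' i
    · exact ⟨a, n - a, by ring, Or.inl (chain_of_even rfl (by ring))⟩
    · exact ⟨n - (a + 1), a + 1, by ring, Or.inr (chain_of_odd (by ring) (by ring))⟩

theorem Bset_eq_range_chain_add_succ (n : ℤ) (k l : OddZ) :
    Bset n k l = Set.range fun i => chain n k l i + chain n k l (i + 1) := by
  ext x
  constructor
  · rintro (⟨a, b, hab, rfl⟩ | ⟨a, b, hab, rfl⟩)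
    · refine ⟨2 * a - 1, (add_comm _ _).trans ?_⟩
      exact congrArg₂ (· + ·) (chain_of_even (by ring) hab) (chain_of_odd rfl (by omega))
    · exact ⟨2 * a, congrArg₂ (· + ·) (chain_of_even rfl (by omega))
        (chain_of_odd (by ring) (by omega))⟩
  · rintro ⟨i, rfl⟩
    obtain ⟨a, rfl | rfl⟩ := Int.even_or_odd' i
    · exact Or.inr ⟨a, n - 1 - a, by ring, congrArg₂ (· + ·) (chain_of_even rfl (by omega))
        (chain_of_odd (by ring) (by omega))⟩
    · refine Or.inl ⟨a + 1, n - (a + 1), by ring, (add_comm _ _).trans ?_⟩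
      exact congrArg₂ (· + ·) (chain_of_even (by ring) (by omega))
        (chain_of_odd (by ring) (by omega))

theorem linearIndependent_chain {k l : OddZ} (hkl : k ≠ l) (n : ℤ) :
    LinearIndependent ℚ (chain n k l) :=
  (linearIndependent_single_one (R := ℚ) (ι := ℤ × ℤ × OddZ × OddZ)).comp _
    (chainIdx_injective hkl n)

/-- For `k < l`, `B^n_{k,l}` is linearly independent, its span is contained in `X^n_{k,l}`,
and the quotient `X^n_{k,l} / span(B^n_{k,l})` is one-dimensional over ℚ. -/
theorem stmt_3 (n : ℤ) (k l : OddZ) (hkl : (k : ℤ) < (l : ℤ)) :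
    LinearIndependent ℚ (fun v : Bset n k l => (v : XSp)) ∧
    Submodule.span ℚ (Bset n k l) ≤ Xsub n k l ∧
    Module.rank ℚ
      (↥(Xsub n k l) ⧸ (Submodule.span ℚ (Bset n k l)).comap (Xsub n k l).subtype) = 1 := by
  have hw := linearIndependent_chain (fun h => hkl.ne (congrArg Subtype.val h)) n
  rw [Bset_eq_range_chain_add_succ, Xsub_eq_span_range_chain,
    ← span_singleton_sup_span_add_succ (chain n k l)]
  exact ⟨hw.add_succ.linearIndepOn_id, le_sup_right,
    rank_quotient_span_singleton_sup hw.notMem_span_add_succ⟩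
end

section
/- For all k, l ∈ O with k < l and every m ∈ ℤ: the subspace X^{2m}_{k,l} is the internal direct sum of span(B^{2m}_{k,l}) and the line ℚ·X^{m,m}_{k,l} (in particular X^{m,m}_{k,l} ∉ span(B^{2m}_{k,l})), and the subspace X^{2m+1}_{k,l} is the internal direct sum of span(B^{2m+1}_{k,l}) and the line ℚ·X^{m,m+1}_{k,l} (in particular X^{m,m+1}_{k,l} ∉ span(B^{2m+1}_{k,l})). -/
/-!
The functional `signedCoeff k l`, which sums the coefficients on `X^{·,·}_{k,l}` and subtracts
those on `X^{·,·}_{l,k}`, kills every element of `B^n_{k,l}` but takes the value `1` on each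
`X^{a,b}_{k,l}`; this gives the disjointness. Modulo `span B^n_{k,l}`, the two kinds of elements
of `B^n_{k,l}` give `X^{j+1,n-j-1}_{l,k} ≡ -X^{n-j-1,j+1}_{k,l} ≡ X^{j,n-j}_{l,k}`, so all the
`X^{a,b}_{l,k}` with `a + b = n` are congruent to each other and to `-X^{a',b'}_{k,l}` for any
`a' + b' = n`; hence one vector `X^{a,b}_{k,l}` complements `span B^n_{k,l}` in `X^n_{k,l}`.
-/

open Submodule

noncomputable def signedCoeff (k l : OddZ) : XSp →ₗ[ℚ] ℚ :=
  Finsupp.linearCombination ℚ fun p : ℤ × ℤ × OddZ × OddZ =>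
    if p.2.2 = (k, l) then 1 else if p.2.2 = (l, k) then -1 else 0

section

variable {n a b : ℤ} {k l : OddZ}

@[simp]
lemma signedCoeff_Xb (a b : ℤ) (k l : OddZ) : signedCoeff k l (Xb a b k l) = 1 := by
  simp [signedCoeff, Xb]

lemma signedCoeff_Xb_swap (hkl : k ≠ l) (a b : ℤ) : signedCoeff k l (Xb a b l k) = -1 := by
  simp [signedCoeff, Xb, hkl, hkl.symm]

lemma span_Bset_le_ker_signedCoeff (hkl : k ≠ l) :
    span ℚ (Bset n k l) ≤ LinearMap.ker (signedCoeff k l) := by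
  rw [span_le]
  rintro x (⟨a, b, -, rfl⟩ | ⟨a, b, -, rfl⟩) <;> simp [signedCoeff_Xb_swap hkl]

lemma Xb_notMem_span_Bset (hkl : k ≠ l) (a b : ℤ) : Xb a b k l ∉ span ℚ (Bset n k l) :=
  fun h ↦ by simpa using span_Bset_le_ker_signedCoeff hkl h

lemma disjoint_span_Bset_span_Xb (hkl : k ≠ l) (a b : ℤ) :
    Disjoint (span ℚ (Bset n k l)) (span ℚ {Xb a b k l}) := by
  rw [disjoint_span_singleton']
  · exact Xb_notMem_span_Bset hkl a b
  · simp [Xb]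

lemma span_Bset_le_Xsub : span ℚ (Bset n k l) ≤ Xsub n k l := by
  have hgen {a b : ℤ} (hab : a + b = n) : Xb a b k l ∈ Xsub n k l ∧ Xb a b l k ∈ Xsub n k l :=
    ⟨subset_span ⟨a, b, hab, .inl rfl⟩, subset_span ⟨a, b, hab, .inr rfl⟩⟩
  rw [span_le]
  rintro x (⟨a, b, hab, rfl⟩ | ⟨a, b, hab, rfl⟩)
  · exact add_mem (hgen hab).1 (hgen (by omega)).2
  · exact add_mem (hgen (by omega)).1 (hgen (by omega)).2

lemma mkQ_Xb_swap (hab : a + b = n) :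
    (span ℚ (Bset n k l)).mkQ (Xb b a l k) = -(span ℚ (Bset n k l)).mkQ (Xb a b k l) := by
  rw [eq_neg_iff_add_eq_zero, ← map_add, add_comm, mkQ_apply, Quotient.mk_eq_zero]
  exact subset_span (.inl ⟨a, b, hab, rfl⟩)

lemma mkQ_Xb_swap_succ (hab : a + b = n - 1) :
    (span ℚ (Bset n k l)).mkQ (Xb b (a + 1) l k) =
      -(span ℚ (Bset n k l)).mkQ (Xb a (b + 1) k l) := by
  rw [eq_neg_iff_add_eq_zero, ← map_add, add_comm, mkQ_apply, Quotient.mk_eq_zero]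
  exact subset_span (.inr ⟨a, b, hab, rfl⟩)

lemma mkQ_Xb_swap_eq (hab : a + b = n) :
    (span ℚ (Bset n k l)).mkQ (Xb a b l k) = (span ℚ (Bset n k l)).mkQ (Xb 0 n l k) := by
  set π := (span ℚ (Bset n k l)).mkQ
  have hperiodic : Function.Periodic (fun j ↦ π (Xb j (n - j) l k)) 1 := by
    intro j
    have hstep := mkQ_Xb_swap_succ (k := k) (l := l) (a := n - (j + 1)) (b := j) (by ring)
    rw [show n - (j + 1) + 1 = n - j by ring] at hstep
    simp only [mkQ_Xb_swap (k := k) (l := l) (a := n - (j + 1)) (b := j + 1) (by ring), hstep, π]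
  simpa [show b = n - a by omega] using hperiodic.zsmul_eq a

lemma mkQ_Xb_eq (hab : a + b = n) :
    (span ℚ (Bset n k l)).mkQ (Xb a b k l) = -(span ℚ (Bset n k l)).mkQ (Xb 0 n l k) := by
  rw [← mkQ_Xb_swap_eq (a := b) (b := a) (by omega), mkQ_Xb_swap hab, neg_neg]

lemma span_Bset_sup_span_Xb (hab : a + b = n) :
    span ℚ (Bset n k l) ⊔ span ℚ {Xb a b k l} = Xsub n k l := by
  set p := span ℚ (Bset n k l)
  refine le_antisymm (sup_le span_Bset_le_Xsub ?_) ?_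
  · rw [span_le, Set.singleton_subset_iff]
    exact subset_span ⟨a, b, hab, .inl rfl⟩
  · rw [← comap_map_mkQ, map_span, Set.image_singleton, Xsub, span_le]
    rintro x ⟨a', b', hab', rfl | rfl⟩ <;> rw [SetLike.mem_coe, mem_comap, mem_span_singleton]
    · exact ⟨1, by rw [one_smul, mkQ_Xb_eq hab, mkQ_Xb_eq hab']⟩
    · exact ⟨-1, by rw [neg_one_smul, mkQ_Xb_eq hab, mkQ_Xb_swap_eq hab', neg_neg]⟩

end

/-- For `k < l` and `m ∈ ℤ`: `X^{2m}_{k,l}` is the internal direct sum of `span(B^{2m}_{k,l})`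
and the line `ℚ·X^{m,m}_{k,l}` (in particular `X^{m,m}_{k,l} ∉ span(B^{2m}_{k,l})`), and
`X^{2m+1}_{k,l}` is the internal direct sum of `span(B^{2m+1}_{k,l})` and the line
`ℚ·X^{m,m+1}_{k,l}` (in particular `X^{m,m+1}_{k,l} ∉ span(B^{2m+1}_{k,l})`). -/
theorem stmt_4 (k l : OddZ) (hkl : (k : ℤ) < (l : ℤ)) (m : ℤ) :
    (Disjoint (Submodule.span ℚ (Bset (2 * m) k l)) (Submodule.span ℚ {Xb m m k l}) ∧
      Submodule.span ℚ (Bset (2 * m) k l) ⊔ Submodule.span ℚ {Xb m m k l} = Xsub (2 * m) k l ∧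
      Xb m m k l ∉ Submodule.span ℚ (Bset (2 * m) k l)) ∧
    (Disjoint (Submodule.span ℚ (Bset (2 * m + 1) k l)) (Submodule.span ℚ {Xb m (m + 1) k l}) ∧
      Submodule.span ℚ (Bset (2 * m + 1) k l) ⊔ Submodule.span ℚ {Xb m (m + 1) k l} =
        Xsub (2 * m + 1) k l ∧
      Xb m (m + 1) k l ∉ Submodule.span ℚ (Bset (2 * m + 1) k l)) := by
  have hne : k ≠ l := fun h ↦ hkl.ne (congrArg Subtype.val h)
  exact ⟨⟨disjoint_span_Bset_span_Xb hne m m, span_Bset_sup_span_Xb (by ring),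
      Xb_notMem_span_Bset hne m m⟩,
    ⟨disjoint_span_Bset_span_Xb hne m (m + 1), span_Bset_sup_span_Xb (by ring),
      Xb_notMem_span_Bset hne m (m + 1)⟩⟩
end

section
/- The union ⋃ B^n_{k,l}, taken over all n ∈ ℤ and all k, l ∈ O with k ≤ l, is a linearly independent subset of X. -/
open Finsupp

theorem Finsupp.linearIndependent_of_triangular {R I α : Type*} [Ring R] [NoZeroDivisors R]
    [LinearOrder α] (v : I → I →₀ R) (w : I → α) (hdiag : ∀ i, v i i ≠ 0)
    (hlt : ∀ i j, j ≠ i → v i j ≠ 0 → w j < w i) : LinearIndependent R v := by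
  rw [linearIndependent_iff]
  intro c hc
  by_contra hne
  obtain ⟨i, hi, hmax⟩ := c.support.exists_max_image (fun j => w j) (support_nonempty_iff.2 hne)
  have hzero : ∑ j ∈ c.support, c j * v j i = 0 := by
    simpa [linearCombination_apply, Finsupp.sum] using DFunLike.congr_fun hc i
  rw [Finset.sum_eq_single i (fun j hj hji => ?_) (fun h => absurd hi h)] at hzero
  · exact mul_ne_zero (mem_support_iff.1 hi) (hdiag i) hzero
  · by_contra hji'
    exact (hmax j hj).not_gt (hlt j i (Ne.symm hji) (right_ne_zero_of_mul hji'))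

namespace PairVectors

variable {K : Type*} [LinearOrder K]

def swap : ℤ × ℤ × K × K → ℤ × ℤ × K × K
  | (a, b, k, l) => (b, a, l, k)

def swapShift : ℤ × ℤ × K × K → ℤ × ℤ × K × K
  | (a, b, k, l) => (b - 1, a + 1, l, k)

def partner : ℤ × ℤ × K × K → ℤ × ℤ × K × K
  | (a, b, k, l) => if k < l ∨ (k = l ∧ b ≤ a) then (b, a, l, k) else (b - 1, a + 1, l, k)

/-- The position of an index along the path formed by the pairs `{p, partner p}`. -/
def weight : ℤ × ℤ × K × K → ℤ
  | (a, b, k, l) =>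
    if k < l then 2 * a else if l < k then 2 * b - 1 else if a ≤ b then 2 * (b - a)
    else 2 * (a - b) + 1

theorem weight_partner_lt (p : ℤ × ℤ × K × K) (hp : partner p ≠ p) :
    weight (partner p) < weight p := by
  obtain ⟨a, b, k, l⟩ := p
  rcases lt_trichotomy k l with hkl | rfl | hkl
  · simp [partner, weight, hkl, hkl.not_gt]
  · by_cases hba : b ≤ a <;>
      simp only [partner, weight, hba, lt_self_iff_false, and_self, and_false, or_true, or_self,
        ↓reduceIte, ne_eq, Prod.mk.injEq, and_true, not_and, tsub_le_iff_right] at hp ⊢ <;>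
      split_ifs <;> omega
  · simp only [partner, weight, hkl.not_gt, hkl.ne', false_and, or_self, if_false, hkl, if_true]
    omega

theorem partner_eq_or_partner_eq {p q : ℤ × ℤ × K × K} (h : q = swap p ∨ q = swapShift p) :
    partner p = q ∨ partner q = p := by
  obtain ⟨a, b, k, l⟩ := p
  rcases lt_trichotomy k l with hkl | rfl | hkl
  · rcases h with rfl | rfl <;> simp [partner, swap, swapShift, hkl, hkl.not_gt, hkl.ne']
  · rcases h with rfl | rfl <;> simp [partner, swap, swapShift] <;> omega
  · rcases h with rfl | rfl <;> simp [partner, swap, swapShift, hkl, hkl.not_gt, hkl.ne']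

noncomputable def pairVec (p : ℤ × ℤ × K × K) : (ℤ × ℤ × K × K) →₀ ℚ :=
  single p 1 + single (partner p) 1

theorem linearIndependent_pairVec : LinearIndependent ℚ (pairVec (K := K)) := by
  refine linearIndependent_of_triangular _ weight (fun p => ?_) (fun p q hqp hq => ?_)
  · rw [pairVec, Finsupp.add_apply, single_eq_same, single_apply]
    split_ifs <;> norm_num
  · have hq_eq : partner p = q := by
      by_contra h
      simp [pairVec, h, hqp.symm] at hq
    exact hq_eq ▸ weight_partner_lt p (hq_eq ▸ hqp)

theorem single_add_single_mem_range_pairVec {p q : ℤ × ℤ × K × K}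
    (h : q = swap p ∨ q = swapShift p) : single p 1 + single q 1 ∈ Set.range pairVec := by
  rcases partner_eq_or_partner_eq h with hp | hq
  · exact ⟨p, by rw [pairVec, hp]⟩
  · exact ⟨q, by rw [pairVec, hq, add_comm]⟩

end PairVectors

/-- The union of the sets `B^n_{k,l}` over all `n ∈ ℤ` and odd `k ≤ l` is a linearly
independent subset of `X`. -/
theorem stmt_5 :
    LinearIndependent ℚ
      (fun v : (⋃ (n : ℤ) (k : OddZ) (l : OddZ) (_ : (k : ℤ) ≤ (l : ℤ)), Bset n k l) =>
        (v : XSp)) := by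
  refine PairVectors.linearIndependent_pairVec.linearIndepOn_id.mono ?_
  simp only [Set.iUnion_subset_iff]
  rintro n k l - v (⟨a, b, -, rfl⟩ | ⟨a, b, -, rfl⟩)
  · exact PairVectors.single_add_single_mem_range_pairVec (Or.inl rfl)
  · exact PairVectors.single_add_single_mem_range_pairVec (Or.inr (by simp [PairVectors.swapShift]))
end

section
/- The sequence 0 → J → X → Y → 0 is exact, where the first map is F1 and the second is Ψ; that is: F1 is injective, the range of F1 equals the kernel of Ψ, and Ψ is surjective. -/
/-- The free ℚ-vector space on symbols indexed by `(n, k, l)`, `n ∈ ℤ`, `k, l` odd. -/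
abbrev WSp : Type := (ℤ × OddZ × OddZ) →₀ ℚ

/-- The subspace of relations, spanned by the elements `Y^n_{k,l} + Y^n_{l,k}`. -/
noncomputable def YRel : Submodule ℚ WSp :=
  Submodule.span ℚ
    {w | ∃ (n : ℤ) (k l : OddZ),
      w = Finsupp.single (n, k, l) 1 + Finsupp.single (n, l, k) 1}

/-- The space `Y`, the quotient of the free space by the relations `Y^n_{k,l} = -Y^n_{l,k}`. -/
abbrev YSp : Type := WSp ⧸ YRel

/-- The image `Y^n_{k,l}` of a generator in the quotient `Y`. -/
noncomputable def Yb (n : ℤ) (k l : OddZ) : YSp :=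
  Submodule.Quotient.mk (Finsupp.single (n, k, l) 1)

/-- The space `J`, with basis the symbols `J^+_p` (left summand) and `J^A_p` (right summand),
indexed by unordered pairs `p` of elements of `ℤ × O`. -/
abbrev JSp : Type := (Sym2 (ℤ × OddZ) ⊕ Sym2 (ℤ × OddZ)) →₀ ℚ

/-! `F1` is the symmetrization `S` of unordered pairs on the `J^+` summand and `T ∘ S` on the
`J^A` summand, where `T` shifts `b` to `b + 1`. If `S u + T (S v) = 0`, then since both `S u` and
`S v` are invariant under `(a, b, k, l) ↦ (b, a, l, k)`, the finitely supported `S v` is invariant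
under `(a, b) ↦ (a - 1, b + 1)` and hence vanishes; and `S` is injective because forgetting the
order again after symmetrizing is multiplication by `2`.

Modulo the range of `F1`, `X^{a,b}_{k,l} ≡ X^{a+1,b-1}_{k,l}`, so every `X^{a,b}_{k,l}` is congruent
to `X^{0,a+b}_{k,l}`, and `X^{0,n}_{k,l} + X^{0,n}_{l,k} ≡ 0` is the relation defining `Y`. Hence
the projection onto `X / range F1` factors through `Ψ`, which gives `ker Ψ ≤ range F1`. -/

open Finsupp

theorem Finsupp.apply_eq_zero_of_injective_of_forall_apply_eq {ι M : Type*} [Zero M]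
    (f : ι →₀ M) {φ : ℕ → ι} (hφ : Function.Injective φ) (h : ∀ n, f (φ n) = f (φ 0)) :
    f (φ 0) = 0 := by
  by_contra h0
  refine Set.infinite_of_injective_forall_mem hφ (fun n => ?_) f.hasFiniteSupport
  rwa [Function.mem_support, h n]

theorem Finsupp.lhom_ext_sym2 {β R M : Type*} [Semiring R] [AddCommMonoid M] [Module R M]
    {f g : (Sym2 β →₀ R) →ₗ[R] M} (h : ∀ x y, f (single s(x, y) 1) = g (single s(x, y) 1)) :
    f = g :=
  lhom_ext' fun p => LinearMap.ext_ring <| p.ind h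

section Symmetrize

variable {α : Type*}

noncomputable def symmetrize : (Sym2 (ℤ × α) →₀ ℚ) →ₗ[ℚ] (ℤ × ℤ × α × α →₀ ℚ) :=
  linearCombination ℚ <| Sym2.lift
    ⟨fun x y => single (x.1, y.1, x.2, y.2) 1 + single (y.1, x.1, y.2, x.2) 1,
      fun _ _ => add_comm _ _⟩

theorem symmetrize_single (a b : ℤ) (k l : α) :
    symmetrize (single s((a, k), (b, l)) 1) = single (a, b, k, l) 1 + single (b, a, l, k) 1 := by
  simp [symmetrize]

def swapIndex (q : ℤ × ℤ × α × α) : ℤ × ℤ × α × α := (q.2.1, q.1, q.2.2.2, q.2.2.1)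

theorem swapIndex_involutive : Function.Involutive (swapIndex (α := α)) := fun _ => rfl

theorem lmapDomain_swapIndex_comp_symmetrize :
    lmapDomain ℚ ℚ swapIndex ∘ₗ symmetrize = symmetrize (α := α) := by
  refine lhom_ext_sym2 fun ⟨a, k⟩ ⟨b, l⟩ => ?_
  simp only [LinearMap.comp_apply, lmapDomain_apply, symmetrize_single, mapDomain_add,
    mapDomain_single]
  exact add_comm _ _

theorem symmetrize_apply_swap (v : Sym2 (ℤ × α) →₀ ℚ) (a b : ℤ) (k l : α) :
    symmetrize v (b, a, l, k) = symmetrize v (a, b, k, l) := by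
  conv_rhs => rw [← lmapDomain_swapIndex_comp_symmetrize]
  exact (mapDomain_apply swapIndex_involutive.injective _ (b, a, l, k)).symm

theorem lmapDomain_comp_symmetrize_eq_two_smul :
    lmapDomain ℚ ℚ (fun q : ℤ × ℤ × α × α => s((q.1, q.2.2.1), (q.2.1, q.2.2.2))) ∘ₗ symmetrize =
      (2 : ℚ) • LinearMap.id := by
  refine lhom_ext_sym2 fun ⟨a, k⟩ ⟨b, l⟩ => ?_
  simp only [LinearMap.comp_apply, lmapDomain_apply, symmetrize_single, mapDomain_add,
    mapDomain_single, LinearMap.smul_apply, LinearMap.id_apply]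
  rw [Sym2.eq_swap (a := (b, l)), two_smul]

theorem symmetrize_injective : Function.Injective (symmetrize (α := α)) := by
  intro u v h
  have hR := LinearMap.congr_fun (lmapDomain_comp_symmetrize_eq_two_smul (α := α))
  simp only [LinearMap.comp_apply, LinearMap.smul_apply, LinearMap.id_apply] at hR
  exact smul_right_injective _ two_ne_zero (show (2 : ℚ) • u = (2 : ℚ) • v by rw [← hR, ← hR, h])

noncomputable def shiftSnd : (ℤ × ℤ × α × α →₀ ℚ) →ₗ[ℚ] (ℤ × ℤ × α × α →₀ ℚ) :=
  lmapDomain ℚ ℚ fun q => (q.1, q.2.1 + 1, q.2.2)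

theorem shiftSnd_apply_add_one (g : ℤ × ℤ × α × α →₀ ℚ) (a b : ℤ) (k l : α) :
    shiftSnd g (a, b + 1, k, l) = g (a, b, k, l) := by
  refine mapDomain_apply (fun q r h => ?_) g (a, b, k, l)
  simpa [Prod.ext_iff] using h

theorem symmetrize_eq_zero_of_add_shiftSnd_eq_zero {u v : Sym2 (ℤ × α) →₀ ℚ}
    (h : symmetrize u + shiftSnd (symmetrize v) = 0) : symmetrize v = 0 := by
  set g := symmetrize v
  have hu : ∀ a b k l, symmetrize u (a, b + 1, k, l) = -g (a, b, k, l) := fun a b k l => by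
    have := congr($h (a, b + 1, k, l))
    rw [Finsupp.add_apply, shiftSnd_apply_add_one] at this
    exact eq_neg_of_add_eq_zero_left this
  have hg : ∀ a b k l, g (a - 1, b + 1, k, l) = g (a, b, k, l) := fun a b k l =>
    calc g (a - 1, b + 1, k, l) = g (b + 1, a - 1, l, k) := (symmetrize_apply_swap v _ _ _ _).symm
      _ = -symmetrize u (b + 1, a - 1 + 1, l, k) := by rw [hu, neg_neg]
      _ = -symmetrize u (a, b + 1, k, l) := by rw [sub_add_cancel, symmetrize_apply_swap]
      _ = g (a, b, k, l) := by rw [hu, neg_neg]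
  ext ⟨a, b, k, l⟩
  have hφ : Function.Injective fun n : ℕ => (a - n, b + n, k, l) := fun m n h => by
    simpa using h
  have hconst : ∀ n : ℕ, g (a - n, b + n, k, l) = g (a - (0 : ℕ), b + (0 : ℕ), k, l) := by
    intro n
    induction n with
    | zero => rfl
    | succ n ih => rw [Nat.cast_succ, ← sub_sub, ← add_assoc, hg, ih]
  simpa using apply_eq_zero_of_injective_of_forall_apply_eq g hφ hconst

noncomputable def symmetrizeShift :
    (Sym2 (ℤ × α) ⊕ Sym2 (ℤ × α) →₀ ℚ) →ₗ[ℚ] (ℤ × ℤ × α × α →₀ ℚ) :=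
  symmetrize.coprod (shiftSnd ∘ₗ symmetrize) ∘ₗ (sumFinsuppLEquivProdFinsupp ℚ).toLinearMap

theorem symmetrizeShift_single_inl (p : Sym2 (ℤ × α)) :
    symmetrizeShift (single (Sum.inl p) 1) = symmetrize (single p 1) := by
  simp [symmetrizeShift]

theorem symmetrizeShift_single_inr (p : Sym2 (ℤ × α)) :
    symmetrizeShift (single (Sum.inr p) 1) = shiftSnd (symmetrize (single p 1)) := by
  simp [symmetrizeShift]

theorem symmetrizeShift_injective : Function.Injective (symmetrizeShift (α := α)) := by
  rw [symmetrizeShift, LinearMap.coe_comp, LinearEquiv.coe_coe]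
  refine Function.Injective.comp ?_ (LinearEquiv.injective _)
  refine (injective_iff_map_eq_zero _).2 fun ⟨u, v⟩ h => ?_
  rw [LinearMap.coprod_apply, LinearMap.comp_apply] at h
  have hv := symmetrize_eq_zero_of_add_shiftSnd_eq_zero h
  rw [hv, map_zero, add_zero] at h
  rw [← map_zero symmetrize] at h hv
  exact Prod.ext (symmetrize_injective h) (symmetrize_injective hv)

end Symmetrize

theorem eq_symmetrizeShift (F1 : JSp →ₗ[ℚ] XSp)
    (hplus : ∀ (a b : ℤ) (k l : OddZ),
      F1 (single (Sum.inl s((a, k), (b, l))) 1) = Xb a b k l + Xb b a l k)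
    (hA : ∀ (a b : ℤ) (k l : OddZ),
      F1 (single (Sum.inr s((a, k), (b, l))) 1) = Xb a (b + 1) k l + Xb b (a + 1) l k) :
    F1 = symmetrizeShift := by
  refine lhom_ext' fun i => LinearMap.ext_ring ?_
  rcases i with p | p <;> refine p.ind fun ⟨a, k⟩ ⟨b, l⟩ => ?_
  · simp [hplus, symmetrizeShift_single_inl, symmetrize_single, Xb]
  · simp [hA, symmetrizeShift_single_inr, symmetrize_single, shiftSnd, Xb, mapDomain_add]

theorem Yb_add_Yb_swap (n : ℤ) (k l : OddZ) : Yb n k l + Yb n l k = 0 := by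
  rw [Yb, Yb, ← Submodule.Quotient.mk_add, Submodule.Quotient.mk_eq_zero]
  exact Submodule.subset_span ⟨n, k, l, rfl⟩

section Exactness

variable {F1 : JSp →ₗ[ℚ] XSp}
    (hplus : ∀ (a b : ℤ) (k l : OddZ),
      F1 (single (Sum.inl s((a, k), (b, l))) 1) = Xb a b k l + Xb b a l k)
    (hA : ∀ (a b : ℤ) (k l : OddZ),
      F1 (single (Sum.inr s((a, k), (b, l))) 1) = Xb a (b + 1) k l + Xb b (a + 1) l k)
    {Ψ : XSp →ₗ[ℚ] YSp} (hΨ : ∀ (a b : ℤ) (k l : OddZ), Ψ (Xb a b k l) = Yb (a + b) k l)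

include hplus hA

include hΨ in
theorem comp_eq_zero_of_apply_Xb : Ψ ∘ₗ F1 = 0 := by
  refine lhom_ext' fun i => LinearMap.ext_ring ?_
  rcases i with p | p <;> refine p.ind fun ⟨a, k⟩ ⟨b, l⟩ => ?_
  · simp only [LinearMap.comp_apply, lsingle_apply, hplus, map_add, hΨ, LinearMap.zero_apply]
    rw [add_comm b a, Yb_add_Yb_swap]
  · simp only [LinearMap.comp_apply, lsingle_apply, hA, map_add, hΨ, LinearMap.zero_apply]
    rw [add_left_comm b, Yb_add_Yb_swap]

theorem mkQ_range_Xb_add_one_left (a b : ℤ) (k l : OddZ) :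
    (LinearMap.range F1).mkQ (Xb (a + 1) b k l) = (LinearMap.range F1).mkQ (Xb a (b + 1) k l) := by
  rw [Submodule.mkQ_apply, Submodule.mkQ_apply, Submodule.Quotient.eq]
  refine ⟨single (Sum.inl s((b, l), (a + 1, k))) 1 - single (Sum.inr s((a, k), (b, l))) 1, ?_⟩
  rw [map_sub, hplus, hA]
  abel

theorem mkQ_range_Xb (a b : ℤ) (k l : OddZ) :
    (LinearMap.range F1).mkQ (Xb a b k l) = (LinearMap.range F1).mkQ (Xb 0 (a + b) k l) := by
  have hper : Function.Periodic (fun c ↦ (LinearMap.range F1).mkQ (Xb c (a + b - c) k l)) 1 := by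
    intro c
    dsimp only
    rw [mkQ_range_Xb_add_one_left hplus hA, sub_add_eq_sub_sub, sub_add_cancel]
  simpa using hper.zsmul_eq a

theorem mkQ_range_Xb_add_Xb_swap (n : ℤ) (k l : OddZ) :
    (LinearMap.range F1).mkQ (Xb 0 n k l) + (LinearMap.range F1).mkQ (Xb 0 n l k) = 0 := by
  have hswap := mkQ_range_Xb hplus hA n 0 l k
  rw [add_zero] at hswap
  rw [← hswap, ← map_add, Submodule.mkQ_apply, Submodule.Quotient.mk_eq_zero, ← hplus]
  exact LinearMap.mem_range_self _ _

include hΨ in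
theorem exists_comp_eq_mkQ_range :
    ∃ Φ : YSp →ₗ[ℚ] XSp ⧸ LinearMap.range F1, Φ ∘ₗ Ψ = (LinearMap.range F1).mkQ := by
  let Φ₀ : WSp →ₗ[ℚ] XSp ⧸ LinearMap.range F1 :=
    linearCombination ℚ fun q => (LinearMap.range F1).mkQ (Xb 0 q.1 q.2.1 q.2.2)
  have hrel : YRel ≤ LinearMap.ker Φ₀ := by
    refine Submodule.span_le.2 ?_
    rintro _ ⟨n, k, l, rfl⟩
    simp only [SetLike.mem_coe, LinearMap.mem_ker, map_add, Φ₀, linearCombination_single,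
      one_smul, mkQ_range_Xb_add_Xb_swap hplus hA]
  refine ⟨YRel.liftQ Φ₀ hrel, lhom_ext' fun ⟨a, b, k, l⟩ => LinearMap.ext_ring ?_⟩
  simp only [LinearMap.comp_apply, lsingle_apply]
  rw [← Xb, hΨ, mkQ_range_Xb hplus hA]
  simp [Yb, Φ₀]

include hΨ in
theorem ker_le_range_of_apply_Xb : LinearMap.ker Ψ ≤ LinearMap.range F1 := by
  obtain ⟨Φ, hΦ⟩ := exists_comp_eq_mkQ_range hplus hA hΨ
  intro x hx
  rw [← Submodule.ker_mkQ (LinearMap.range F1), LinearMap.mem_ker, ← hΦ, LinearMap.comp_apply,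
    LinearMap.mem_ker.1 hx, map_zero]

end Exactness

theorem surjective_of_apply_Xb {Ψ : XSp →ₗ[ℚ] YSp}
    (hΨ : ∀ (a b : ℤ) (k l : OddZ), Ψ (Xb a b k l) = Yb (a + b) k l) :
    Function.Surjective Ψ := by
  have hcomp : Ψ ∘ₗ lmapDomain ℚ ℚ (fun q : ℤ × OddZ × OddZ => (0, q)) = YRel.mkQ :=
    lhom_ext' fun ⟨n, k, l⟩ => LinearMap.ext_ring <| by
      simp only [LinearMap.comp_apply, lsingle_apply, lmapDomain_apply, mapDomain_single]
      rw [← Xb, hΨ, zero_add]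
      rfl
  exact Function.Surjective.of_comp (g := lmapDomain ℚ ℚ _) <| by
    rw [← LinearMap.coe_comp, hcomp]
    exact YRel.mkQ_surjective

/-- The sequence `0 → J → X → Y → 0` is exact, where `F1 : J → X` is the linear map with
`F1(J^+_{{(a,k),(b,l)}}) = X^{a,b}_{k,l} + X^{b,a}_{l,k}` and
`F1(J^A_{{(a,k),(b,l)}}) = X^{a,b+1}_{k,l} + X^{b,a+1}_{l,k}`, and `Ψ : X → Y` is the linear
map with `Ψ(X^{a,b}_{k,l}) = Y^{a+b}_{k,l}`: that is, `F1` is injective, the range of `F1`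
equals the kernel of `Ψ`, and `Ψ` is surjective. -/
theorem stmt_8 (F1 : JSp →ₗ[ℚ] XSp)
    (hF1plus : ∀ (a b : ℤ) (k l : OddZ),
      F1 (Finsupp.single (Sum.inl s((a, k), (b, l))) 1) = Xb a b k l + Xb b a l k)
    (hF1A : ∀ (a b : ℤ) (k l : OddZ),
      F1 (Finsupp.single (Sum.inr s((a, k), (b, l))) 1) =
        Xb a (b + 1) k l + Xb b (a + 1) l k)
    (Ψ : XSp →ₗ[ℚ] YSp)
    (hΨ : ∀ (a b : ℤ) (k l : OddZ), Ψ (Xb a b k l) = Yb (a + b) k l) :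
    Function.Injective F1 ∧ LinearMap.range F1 = LinearMap.ker Ψ ∧ Function.Surjective Ψ := by
  refine ⟨?_, le_antisymm ?_ (ker_le_range_of_apply_Xb hF1plus hF1A hΨ), surjective_of_apply_Xb hΨ⟩
  · rw [eq_symmetrizeShift F1 hF1plus hF1A]
    exact symmetrizeShift_injective
  · exact LinearMap.range_le_ker_iff.2 (comp_eq_zero_of_apply_Xb hF1plus hF1A hΨ)
end

section
/- For each m ∈ ℤ let G_m : X → ℚ be the linear functional determined on basis vectors by: G_m(X^{a,b}_{k,l}) = k − l if a + b − k − l = m and k + l = 0; G_m(X^{a,b}_{k,l}) = (l − k)/2 if a + b − k − l = m and k + l = 2 or k + l = −2; and G_m(X^{a,b}_{k,l}) = 0 otherwise. Let X̄ = ∩_{m ∈ ℤ} ker(G_m). Then the cosets of the vectors X^{m,0}_{1,−1}, m ∈ ℤ, form a basis of the quotient ℚ-vector space X / X̄. -/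
/-- `1` as an odd integer. -/
def oneOdd : OddZ := ⟨1, odd_one⟩

/-- `-1` as an odd integer. -/
def negOneOdd : OddZ := ⟨-1, ⟨-1, by ring⟩⟩

/-!
The functionals `G_m` are the coordinates of a single linear map `Φ : X → ⨁_{m ∈ ℤ} ℚ` sending
`X^{a,b}_{k,l}` to a multiple of the `(a + b − k − l)`-th unit vector, so `X̄ = ker Φ` and
`X / X̄ ≅ ⨁_m ℚ`. Under this isomorphism the coset of `X^{m,0}_{1,−1}` goes to `2 e_m`, and these
form a basis.
-/

open Module Submodule

theorem LinearMap.exists_basis_quotient_ker {ι R M N : Type*} [Ring R] [AddCommGroup M]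
    [Module R M] [AddCommGroup N] [Module R N] (φ : M →ₗ[R] N) (b : Basis ι R N) (v : ι → M)
    {w : ι → R} (hw : ∀ i, IsUnit (w i)) (hv : ∀ i, φ (v i) = w i • b i) :
    ∃ B : Basis ι R (M ⧸ LinearMap.ker φ), ⇑B = fun i => Submodule.Quotient.mk (v i) := by
  let b' := b.isUnitSMul hw
  have hsurj : Function.Surjective φ := by
    rw [← LinearMap.range_eq_top, eq_top_iff, ← b'.span_eq, span_le]
    rintro _ ⟨i, rfl⟩
    exact ⟨v i, by rw [hv, Basis.isUnitSMul_apply]⟩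
  let e := φ.quotKerEquivOfSurjective hsurj
  refine ⟨b'.map e.symm, funext fun i => ?_⟩
  rw [Basis.map_apply, LinearEquiv.symm_apply_eq, LinearMap.quotKerEquivOfSurjective_apply_mk,
    Basis.isUnitSMul_apply]
  exact (hv i).symm

theorem Finsupp.iInf_ker_lapply_comp {ι R M : Type*} [Semiring R] [AddCommMonoid M] [Module R M]
    (φ : M →ₗ[R] ι →₀ R) : ⨅ i, LinearMap.ker (Finsupp.lapply i ∘ₗ φ) = LinearMap.ker φ := by
  ext x
  simp only [mem_iInf, LinearMap.mem_ker, LinearMap.comp_apply, Finsupp.lapply_apply,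
    Finsupp.ext_iff, Finsupp.coe_zero, Pi.zero_apply]

noncomputable def XSp.level (p : ℤ × ℤ × OddZ × OddZ) : ℤ :=
  p.1 + p.2.1 - (p.2.2.1 : ℤ) - (p.2.2.2 : ℤ)

noncomputable def XSp.weight (p : ℤ × ℤ × OddZ × OddZ) : ℚ :=
  if (p.2.2.1 : ℤ) + (p.2.2.2 : ℤ) = 0 then (((p.2.2.1 : ℤ) - (p.2.2.2 : ℤ) : ℤ) : ℚ)
  else if (p.2.2.1 : ℤ) + (p.2.2.2 : ℤ) = 2 ∨ (p.2.2.1 : ℤ) + (p.2.2.2 : ℤ) = -2 then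
    (((p.2.2.2 : ℤ) - (p.2.2.1 : ℤ) : ℤ) : ℚ) / 2
  else 0

noncomputable def XSp.levelMap : XSp →ₗ[ℚ] (ℤ →₀ ℚ) :=
  Finsupp.lsum ℚ fun p => XSp.weight p • Finsupp.lsingle (XSp.level p)

theorem XSp.levelMap_single (p : ℤ × ℤ × OddZ × OddZ) (c : ℚ) :
    XSp.levelMap (Finsupp.single p c) = Finsupp.single (XSp.level p) (XSp.weight p * c) := by
  rw [XSp.levelMap, Finsupp.lsum_single, LinearMap.smul_apply, Finsupp.lsingle_apply,
    Finsupp.smul_single, smul_eq_mul]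

theorem XSp.levelMap_Xb_one_negOne (m : ℤ) :
    XSp.levelMap (Xb m 0 oneOdd negOneOdd) = (2 : ℚ) • Finsupp.single m 1 := by
  rw [Xb, XSp.levelMap_single, Finsupp.smul_single]
  norm_num [XSp.level, XSp.weight, oneOdd, negOneOdd]

theorem XSp.eq_lapply_comp_levelMap (G : ℤ → XSp →ₗ[ℚ] ℚ)
    (hG : ∀ (m a b : ℤ) (k l : OddZ),
      G m (Xb a b k l) =
        if a + b - (k : ℤ) - (l : ℤ) = m ∧ (k : ℤ) + (l : ℤ) = 0 then
          (((k : ℤ) - (l : ℤ) : ℤ) : ℚ)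
        else if a + b - (k : ℤ) - (l : ℤ) = m ∧
            ((k : ℤ) + (l : ℤ) = 2 ∨ (k : ℤ) + (l : ℤ) = -2) then
          (((l : ℤ) - (k : ℤ) : ℤ) : ℚ) / 2
        else 0)
    (m : ℤ) : G m = Finsupp.lapply m ∘ₗ XSp.levelMap := by
  refine Finsupp.lhom_ext fun ⟨a, b, k, l⟩ c => ?_
  have hsingle : (Finsupp.single (a, b, k, l) c : XSp) = c • Xb a b k l := by
    rw [Xb, Finsupp.smul_single, smul_eq_mul, mul_one]
  rw [LinearMap.comp_apply, XSp.levelMap_single, Finsupp.lapply_apply, Finsupp.single_apply,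
    hsingle, map_smul, hG, smul_eq_mul]
  simp only [XSp.level, XSp.weight]
  split_ifs <;> first | tauto | ring

/-- Let `G_m : X → ℚ` be the linear functionals with `G_m(X^{a,b}_{k,l}) = k − l` if
`a + b − k − l = m` and `k + l = 0`; `G_m(X^{a,b}_{k,l}) = (l − k)/2` if `a + b − k − l = m`
and `k + l = ±2`; and `G_m(X^{a,b}_{k,l}) = 0` otherwise. Let `X̄ = ∩_m ker(G_m)`. Then the
cosets of the vectors `X^{m,0}_{1,−1}`, `m ∈ ℤ`, form a basis of the quotient space `X / X̄`:
they are linearly independent and span the quotient. -/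
theorem stmt_11 (G : ℤ → XSp →ₗ[ℚ] ℚ)
    (hG : ∀ (m a b : ℤ) (k l : OddZ),
      G m (Xb a b k l) =
        if a + b - (k : ℤ) - (l : ℤ) = m ∧ (k : ℤ) + (l : ℤ) = 0 then
          (((k : ℤ) - (l : ℤ) : ℤ) : ℚ)
        else if a + b - (k : ℤ) - (l : ℤ) = m ∧
            ((k : ℤ) + (l : ℤ) = 2 ∨ (k : ℤ) + (l : ℤ) = -2) then
          (((l : ℤ) - (k : ℤ) : ℤ) : ℚ) / 2
        else 0) :
    LinearIndependent ℚ
      (fun m : ℤ =>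
        Submodule.Quotient.mk (p := ⨅ m' : ℤ, LinearMap.ker (G m'))
          (Xb m 0 oneOdd negOneOdd)) ∧
    Submodule.span ℚ
      (Set.range fun m : ℤ =>
        Submodule.Quotient.mk (p := ⨅ m' : ℤ, LinearMap.ker (G m'))
          (Xb m 0 oneOdd negOneOdd)) = ⊤ := by
  have hker : ⨅ m, LinearMap.ker (G m) = LinearMap.ker XSp.levelMap := by
    simp only [XSp.eq_lapply_comp_levelMap G hG, Finsupp.iInf_ker_lapply_comp]
  obtain ⟨B, hB⟩ := XSp.levelMap.exists_basis_quotient_ker Finsupp.basisSingleOne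
    (fun m => Xb m 0 oneOdd negOneOdd) (fun _ => isUnit_of_invertible (2 : ℚ))
    (fun m => by rw [XSp.levelMap_Xb_one_negOne, Finsupp.coe_basisSingleOne])
  rw [hker, ← hB]
  exact ⟨B.linearIndependent, B.span_eq⟩
end
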